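/- arXiv:2506.14553 — 4 statements merged into one kernel-verified Lean document; each statement's English description precedes it below -/
import Mathlib

section
/- Let (α, 𝒜) be a measurable space, let d be a positive integer, and for 1 ≤ i, j ≤ d let μ_{ij} be finite signed measures on α such that for every A ∈ 𝒜 the d×d real matrix (μ_{ij}(A))_{i,j} is positive semidefinite. Then each diagonal entry μ_{ii} is a (nonnegative) finite measure; setting τ := Σ_{i=1}^d μ_{ii} (the trace measure), every μ_{ij} is absolutely continuous with respect to τ, and there exists a measurable map c : α → Matrix (Fin d) (Fin d) ℝ such that c(x) is positive semidefinite with trace Tr(c(x)) = 1 for τ-almost every x and μ_{ij}(A) = ∫_A (c x)_{ij} dτ(x) for all A ∈ 𝒜 and all i, j. Moreover, any two such maps c agree τ-almost everywhere. -/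
open MeasureTheory Set
open scoped ENNReal

/-!
Evaluating the positive semidefinite matrix `(μ i j A)` at `eᵢ ± eⱼ` gives
`2 |μ i j A| ≤ μ i i A + μ j j A ≤ 2 τ A`, so every `μ i j` is absolutely continuous with
respect to the trace measure `τ` and has a Radon–Nikodym density. The density matrix `c` has the
set integrals `(μ i j A)`, so testing against all measurable sets makes `c x` a.e. symmetric, of
trace one, and with `vᵀ (c x) v ≥ 0` for every `v` in a countable dense set, which suffices by
continuity. Trace-one positive semidefinite matrices have entries bounded by one, so any other
such density is integrable and, having the same set integrals, agrees with `c` a.e.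
-/

namespace Matrix

variable {n R : Type*} [Fintype n]

lemma single_add_single_dotProduct_mulVec [DecidableEq n] [CommRing R] (M : Matrix n n R)
    (i j : n) (a b : R) :
    (Pi.single i a + Pi.single j b) ⬝ᵥ M *ᵥ (Pi.single i a + Pi.single j b) =
      a * a * M i i + a * b * M i j + b * a * M j i + b * b * M j j := by
  simp only [add_dotProduct, dotProduct_add, mulVec_add, mulVec_single, single_dotProduct,
    Pi.smul_apply, col_apply, op_smul_eq_mul]
  ring

namespace PosSemidef

variable [CommRing R] [LinearOrder R] [IsStrictOrderedRing R] [StarRing R] [TrivialStar R]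
  {M : Matrix n n R}

lemma two_mul_abs_apply_le (hM : M.PosSemidef) (i j : n) : 2 * |M i j| ≤ M i i + M j j := by
  classical
  have hsymm : M j i = M i j := by simpa using hM.isHermitian.apply i j
  have hplus := hM.dotProduct_mulVec_nonneg (Pi.single i 1 + Pi.single j 1)
  have hminus := hM.dotProduct_mulVec_nonneg (Pi.single i 1 + Pi.single j (-1))
  simp only [star_trivial, single_add_single_dotProduct_mulVec, hsymm] at hplus hminus
  rcases abs_cases (M i j) with ⟨habs, -⟩ | ⟨habs, -⟩ <;> rw [habs] <;> linarith

lemma abs_apply_le_trace (hM : M.PosSemidef) (i j : n) : |M i j| ≤ M.trace := by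
  have hdiag_le (k : n) : M k k ≤ M.trace :=
    Finset.single_le_sum (fun l _ => hM.diag_nonneg (i := l)) (Finset.mem_univ k)
  linarith [hM.two_mul_abs_apply_le i j, hdiag_le i, hdiag_le j]

end PosSemidef

lemma posSemidef_of_dense {M : Matrix n n ℝ} (hM : M.IsHermitian) {D : Set (n → ℝ)}
    (hD : Dense D) (hD_nonneg : ∀ v ∈ D, 0 ≤ v ⬝ᵥ M *ᵥ v) : M.PosSemidef := by
  have hclosed : IsClosed {v : n → ℝ | 0 ≤ v ⬝ᵥ M *ᵥ v} :=
    isClosed_le continuous_const (by simp only [dotProduct, mulVec]; fun_prop)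
  refine .of_dotProduct_mulVec_nonneg hM fun v => ?_
  rw [star_trivial]
  exact closure_minimal hD_nonneg hclosed (hD v)

end Matrix

namespace MeasureTheory

open scoped Matrix

variable {α : Type*} [MeasurableSpace α]

lemma SignedMeasure.exists_isFiniteMeasure_eq_ofReal {s : SignedMeasure α}
    (hs : ∀ A, MeasurableSet A → 0 ≤ s A) :
    ∃ ν : Measure α, IsFiniteMeasure ν ∧
      ∀ A, MeasurableSet A → ν A = ENNReal.ofReal (s A) := by
  have hle : 0 ≤[univ] s :=
    (VectorMeasure.le_restrict_univ_iff_le _ _).2 (VectorMeasure.le_iff.2 hs)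
  refine ⟨s.toMeasureOfZeroLE univ MeasurableSet.univ hle, inferInstance, fun A hA => ?_⟩
  rw [SignedMeasure.toMeasureOfZeroLE_apply _ hle MeasurableSet.univ hA,
    ENNReal.ofReal_eq_coe_nnreal (hs A hA)]
  simp only [univ_inter]

lemma SignedMeasure.setIntegral_rnDeriv {s : SignedMeasure α} {μ : Measure α} [SigmaFinite μ]
    (hs : s ≪ᵥ μ.toENNRealVectorMeasure) {A : Set α} (hA : MeasurableSet A) :
    ∫ x in A, s.rnDeriv μ x ∂μ = s A := by
  conv_rhs => rw [← s.withDensityᵥ_rnDeriv_eq μ hs]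
  rw [withDensityᵥ_apply (s.integrable_rnDeriv μ) hA]

variable {ι : Type*} [Fintype ι] {μ : Measure α} {c c' : α → Matrix ι ι ℝ}

lemma integrable_dotProduct_mulVec (hc : ∀ i j, Integrable (fun x => c x i j) μ)
    (v : ι → ℝ) :
    Integrable (fun x => v ⬝ᵥ c x *ᵥ v) μ := by
  simp only [dotProduct, Matrix.mulVec]
  fun_prop

lemma setIntegral_dotProduct_mulVec (hc : ∀ i j, Integrable (fun x => c x i j) μ) (v : ι → ℝ)
    (A : Set α) :
    ∫ x in A, v ⬝ᵥ c x *ᵥ v ∂μ = v ⬝ᵥ (Matrix.of fun i j => ∫ x in A, c x i j ∂μ) *ᵥ v := by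
  have hcA (i j : ι) : Integrable (fun x => c x i j) (μ.restrict A) := (hc i j).restrict
  simp only [dotProduct, Matrix.mulVec, Matrix.of_apply]
  rw [integral_finsetSum _ fun i _ => by fun_prop]
  refine Finset.sum_congr rfl fun i _ => ?_
  rw [integral_const_mul, integral_finsetSum _ fun j _ => by fun_prop]
  simp only [integral_mul_const]

lemma ae_eq_of_forall_setIntegral_apply_eq (hc : ∀ i j, Integrable (fun x => c x i j) μ)
    (hc' : ∀ i j, Integrable (fun x => c' x i j) μ)
    (h : ∀ i j A, MeasurableSet A → ∫ x in A, c x i j ∂μ = ∫ x in A, c' x i j ∂μ) :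
    c =ᵐ[μ] c' := by
  have hentry (i j : ι) : ∀ᵐ x ∂μ, c x i j = c' x i j :=
    (hc i j).ae_eq_of_forall_setIntegral_eq _ _ (hc' i j) fun A hA _ => h i j A hA
  filter_upwards [ae_all_iff.2 fun i => ae_all_iff.2 (hentry i)] with x hx
  exact Matrix.ext hx

lemma ae_posSemidef_of_forall_setIntegral (hc : ∀ i j, Integrable (fun x => c x i j) μ)
    (h : ∀ A, MeasurableSet A → (Matrix.of fun i j => ∫ x in A, c x i j ∂μ).PosSemidef) :
    ∀ᵐ x ∂μ, (c x).PosSemidef := by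
  have hherm : ∀ᵐ x ∂μ, (c x).IsHermitian := by
    have hsymm : c =ᵐ[μ] fun x => (c x)ᵀ :=
      ae_eq_of_forall_setIntegral_apply_eq hc (fun i j => hc j i) fun i j A hA => by
        simpa using (h A hA).isHermitian.apply j i
    filter_upwards [hsymm] with x hx
    rw [Matrix.IsHermitian, Matrix.conjTranspose_eq_transpose_of_trivial, ← hx]
  obtain ⟨D, hD_countable, hD_dense⟩ := TopologicalSpace.exists_countable_dense (ι → ℝ)
  have hquad : ∀ᵐ x ∂μ, ∀ v ∈ D, 0 ≤ v ⬝ᵥ c x *ᵥ v := by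
    refine (ae_ball_iff hD_countable).2 fun v _ => ?_
    refine ae_nonneg_of_forall_setIntegral_nonneg (integrable_dotProduct_mulVec hc v)
      fun A hA _ => ?_
    simpa [setIntegral_dotProduct_mulVec hc] using (h A hA).dotProduct_mulVec_nonneg v
  filter_upwards [hherm, hquad] with x hx hxD
  exact Matrix.posSemidef_of_dense hx hD_dense hxD

lemma ae_trace_eq_one_of_forall_setIntegral [IsFiniteMeasure μ]
    (hc : ∀ i j, Integrable (fun x => c x i j) μ)
    (h : ∀ A, MeasurableSet A →
      (Matrix.of fun i j => ∫ x in A, c x i j ∂μ).trace = μ.real A) :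
    ∀ᵐ x ∂μ, (c x).trace = 1 := by
  have htrace : Integrable (fun x => (c x).trace) μ := by
    simp only [Matrix.trace, Matrix.diag]
    fun_prop
  refine htrace.ae_eq_of_forall_setIntegral_eq _ _ (integrable_const 1) fun A hA _ => ?_
  have hcA (i : ι) : Integrable (fun x => c x i i) (μ.restrict A) := (hc i i).restrict
  rw [setIntegral_const, smul_eq_mul, mul_one, ← h A hA]
  simp only [Matrix.trace, Matrix.diag, Matrix.of_apply]
  exact integral_finsetSum _ fun i _ => hcA i

lemma integrable_apply_of_ae_posSemidef_of_trace_eq_one [IsFiniteMeasure μ]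
    (hc : ∀ i j, AEStronglyMeasurable (fun x => c x i j) μ)
    (h : ∀ᵐ x ∂μ, (c x).PosSemidef ∧ (c x).trace = 1) (i j : ι) :
    Integrable (fun x => c x i j) μ :=
  (integrable_const 1).mono' (hc i j) <| h.mono fun x hx => by
    simpa [hx.2] using hx.1.abs_apply_le_trace i j

end MeasureTheory

theorem signedMeasure_matrix_trace_factorization_general
    {α : Type*} [MeasurableSpace α] {d : ℕ}
    (μ : Fin d → Fin d → SignedMeasure α)
    (hpsd : ∀ A : Set α, MeasurableSet A →
      (Matrix.of fun i j => μ i j A).PosSemidef) :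
    (∀ i, ∀ A : Set α, MeasurableSet A → 0 ≤ μ i i A) ∧
    ∃ τ : Measure α, IsFiniteMeasure τ ∧
      (∀ A : Set α, MeasurableSet A → τ A = ENNReal.ofReal (∑ i, μ i i A)) ∧
      (∀ i j, ∀ A : Set α, MeasurableSet A → τ A = 0 → μ i j A = 0) ∧
      ∃ c : α → Matrix (Fin d) (Fin d) ℝ,
        (∀ i j, Measurable fun x => c x i j) ∧
        (∀ᵐ x ∂τ, (c x).PosSemidef ∧ (c x).trace = 1) ∧
        (∀ i j, ∀ A : Set α, MeasurableSet A → μ i j A = ∫ x in A, c x i j ∂τ) ∧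
        (∀ c' : α → Matrix (Fin d) (Fin d) ℝ,
          (∀ i j, Measurable fun x => c' x i j) →
          (∀ᵐ x ∂τ, (c' x).PosSemidef ∧ (c' x).trace = 1) →
          (∀ i j, ∀ A : Set α, MeasurableSet A → μ i j A = ∫ x in A, c' x i j ∂τ) →
          c =ᵐ[τ] c') := by
  have htrace (A : Set α) : (Matrix.of fun i j => μ i j A).trace = ∑ i, μ i i A := rfl
  obtain ⟨τ, hτ_fin, hτ⟩ := SignedMeasure.exists_isFiniteMeasure_eq_ofReal (s := ∑ i, μ i i)
    fun A hA => by simpa only [sum_apply, htrace] using (hpsd A hA).trace_nonneg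
  simp only [sum_apply] at hτ
  have hτ_real (A : Set α) (hA : MeasurableSet A) :
      τ.real A = (Matrix.of fun i j => μ i j A).trace := by
    rw [measureReal_def, hτ A hA, ← htrace, ENNReal.toReal_ofReal (hpsd A hA).trace_nonneg]
  have hac (i j : Fin d) (A : Set α) (hA : MeasurableSet A) (hτA : τ A = 0) : μ i j A = 0 := by
    rw [hτ A hA, ENNReal.ofReal_eq_zero, ← htrace] at hτA
    simpa using (hpsd A hA).abs_apply_le_trace i j |>.trans hτA
  let c : α → Matrix (Fin d) (Fin d) ℝ := fun x => Matrix.of fun i j => (μ i j).rnDeriv τ x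
  have hc_int (i j : Fin d) : Integrable (fun x => c x i j) τ :=
    SignedMeasure.integrable_rnDeriv _ _
  have hc_rep (i j : Fin d) (A : Set α) (hA : MeasurableSet A) :
      μ i j A = ∫ x in A, c x i j ∂τ :=
    (SignedMeasure.setIntegral_rnDeriv (VectorMeasure.AbsolutelyContinuous.mk fun A hA hτA =>
      hac i j A hA (by rwa [Measure.toENNRealVectorMeasure_apply_measurable hA] at hτA)) hA).symm
  have hc_mat (A : Set α) (hA : MeasurableSet A) :
      (Matrix.of fun i j => ∫ x in A, c x i j ∂τ) = Matrix.of fun i j => μ i j A := by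
    ext i j
    exact (hc_rep i j A hA).symm
  have hc_psd : ∀ᵐ x ∂τ, (c x).PosSemidef :=
    ae_posSemidef_of_forall_setIntegral hc_int fun A hA => hc_mat A hA ▸ hpsd A hA
  have hc_trace : ∀ᵐ x ∂τ, (c x).trace = 1 :=
    ae_trace_eq_one_of_forall_setIntegral hc_int fun A hA => by rw [hc_mat A hA, hτ_real A hA]
  refine ⟨fun i A hA => (hpsd A hA).diag_nonneg, τ, hτ_fin, hτ, hac, c,
    fun i j => SignedMeasure.measurable_rnDeriv _ _, hc_psd.and hc_trace, hc_rep,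
    fun c' hc'_meas hc'_ae hc'_rep => ?_⟩
  refine ae_eq_of_forall_setIntegral_apply_eq hc_int
    (integrable_apply_of_ae_posSemidef_of_trace_eq_one
      (fun i j => (hc'_meas i j).aestronglyMeasurable) hc'_ae) fun i j A hA => ?_
  rw [← hc_rep i j A hA, hc'_rep i j A hA]

/-- Static form of the factorization in Lemma 3.1 of the paper: a matrix of finite signed
measures `(μ i j)` whose value matrix is positive semidefinite on every measurable set has
nonnegative diagonal entries; the trace measure `τ` (characterized by
`τ A = ∑ i, μ i i A`) dominates every `μ i j`, and there is a `τ`-a.e. unique measurable,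
positive semidefinite, trace-one matrix density `c` with `μ i j A = ∫_A (c x) i j dτ`. -/
theorem signedMeasure_matrix_trace_factorization
    {α : Type*} [MeasurableSpace α] {d : ℕ} (hd : 0 < d)
    (μ : Fin d → Fin d → SignedMeasure α)
    (hpsd : ∀ A : Set α, MeasurableSet A →
      (Matrix.of fun i j => μ i j A).PosSemidef) :
    (∀ i, ∀ A : Set α, MeasurableSet A → 0 ≤ μ i i A) ∧
    ∃ τ : Measure α, IsFiniteMeasure τ ∧
      (∀ A : Set α, MeasurableSet A → τ A = ENNReal.ofReal (∑ i, μ i i A)) ∧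
      (∀ i j, ∀ A : Set α, MeasurableSet A → τ A = 0 → μ i j A = 0) ∧
      ∃ c : α → Matrix (Fin d) (Fin d) ℝ,
        (∀ i j, Measurable fun x => c x i j) ∧
        (∀ᵐ x ∂τ, (c x).PosSemidef ∧ (c x).trace = 1) ∧
        (∀ i j, ∀ A : Set α, MeasurableSet A → μ i j A = ∫ x in A, c x i j ∂τ) ∧
        (∀ c' : α → Matrix (Fin d) (Fin d) ℝ,
          (∀ i j, Measurable fun x => c' x i j) →
          (∀ᵐ x ∂τ, (c' x).PosSemidef ∧ (c' x).trace = 1) →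
          (∀ i j, ∀ A : Set α, MeasurableSet A → μ i j A = ∫ x in A, c' x i j ∂τ) →
          c =ᵐ[τ] c') :=
  signedMeasure_matrix_trace_factorization_general μ hpsd
end

section
/- Let (Ω, 𝒜) be a measurable space, let m ⊆ 𝒜 be a sub-σ-algebra, let P₁ and P₂ be probability measures on (Ω, 𝒜) that agree on m, and let B ∈ m. Define P̄ := (P₁ restricted to B) + (P₂ restricted to Bᶜ), i.e., P̄(A) = P₁(A ∩ B) + P₂(A ∩ Bᶜ). Then P̄ is a probability measure on (Ω, 𝒜) that agrees with P₁ (and P₂) on m, and for every f : Ω → ℝ that is integrable with respect to both P₁ and P₂, f is P̄-integrable and the conditional expectations satisfy E^{P̄}[f | m] = 1_B · E^{P₁}[f | m] + 1_{Bᶜ} · E^{P₂}[f | m], P̄-almost everywhere. -/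
/-!
The pasted measure `P = μ|_B + ν|_{Bᶜ}` coincides with `μ` on `B` and with `ν` on `Bᶜ`. Since `B` is
`m`-measurable, conditional expectations given `m` are local on `B` and on `Bᶜ`, so `P[f|m]` equals
`μ[f|m]` on `B` and `ν[f|m]` on `Bᶜ`. That `P` agrees with `μ` on `m` uses `ν(s ∩ Bᶜ) = μ(s ∩ Bᶜ)`.
-/

open MeasureTheory Set

namespace MeasureTheory

variable {Ω : Type*} {m mΩ : MeasurableSpace Ω} {μ ν : Measure Ω} {B : Set Ω}

namespace Measure

theorem restrict_add_restrict_compl_apply_of_agree (hm : m ≤ mΩ)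
    (hagree : ∀ s : Set Ω, MeasurableSet[m] s → μ s = ν s) (hB : MeasurableSet[m] B)
    {s : Set Ω} (hs : MeasurableSet[m] s) :
    (μ.restrict B + ν.restrict Bᶜ) s = μ s := by
  rw [add_apply, restrict_apply (hm _ hs), restrict_apply (hm _ hs),
    ← hagree _ (hs.inter hB.compl), ← sdiff_eq, measure_inter_add_sdiff s (hm _ hB)]

theorem restrict_add_restrict_compl_restrict (hB : MeasurableSet B) :
    (μ.restrict B + ν.restrict Bᶜ).restrict B = μ.restrict B := by
  simp [restrict_add, restrict_restrict hB]

theorem restrict_add_restrict_compl_restrict_compl (hB : MeasurableSet B) :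
    (μ.restrict B + ν.restrict Bᶜ).restrict Bᶜ = ν.restrict Bᶜ := by
  simp [restrict_add, restrict_restrict hB.compl]

end Measure

theorem sigmaFinite_trim_restrict_add_restrict_compl (hm : m ≤ mΩ) [SigmaFinite (μ.trim hm)]
    [SigmaFinite (ν.trim hm)] (hB : MeasurableSet[m] B) :
    SigmaFinite ((μ.restrict B + ν.restrict Bᶜ).trim hm) := by
  rw [trim_add, ← restrict_trim hm _ hB, ← restrict_trim hm _ hB.compl]
  infer_instance

theorem condExp_ae_eq_restrict_of_restrict_eq {P : Measure Ω} {f : Ω → ℝ} (hm : m ≤ mΩ)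
    [SigmaFinite (P.trim hm)] [SigmaFinite (μ.trim hm)] (hB : MeasurableSet[m] B)
    (hPμ : P.restrict B = μ.restrict B) (hfP : Integrable f P) (hfμ : Integrable f μ) :
    P[f|m] =ᵐ[μ.restrict B] μ[f|m] := by
  calc P[f|m] =ᵐ[μ.restrict B] (P.restrict B)[f|m] := by
        rw [← hPμ]; exact (condExp_restrict_ae_eq_restrict hm hB hfP).symm
    _ = (μ.restrict B)[f|m] := by rw [hPμ]
    _ =ᵐ[μ.restrict B] μ[f|m] := condExp_restrict_ae_eq_restrict hm hB hfμ

theorem condExp_restrict_add_restrict_compl {f : Ω → ℝ} (hm : m ≤ mΩ) [SigmaFinite (μ.trim hm)]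
    [SigmaFinite (ν.trim hm)] (hB : MeasurableSet[m] B) (hfμ : Integrable f μ)
    (hfν : Integrable f ν) :
    (μ.restrict B + ν.restrict Bᶜ)[f|m] =ᵐ[μ.restrict B + ν.restrict Bᶜ]
      B.indicator (μ[f|m]) + Bᶜ.indicator (ν[f|m]) := by
  classical
  have := sigmaFinite_trim_restrict_add_restrict_compl hm (μ := μ) (ν := ν) hB
  have hfP : Integrable f (μ.restrict B + ν.restrict Bᶜ) := hfμ.restrict.add_measure hfν.restrict
  rw [indicator_add_compl_eq_piecewise]
  refine ae_add_measure_iff.2 ⟨?_, ?_⟩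
  · exact (condExp_ae_eq_restrict_of_restrict_eq hm hB
      (Measure.restrict_add_restrict_compl_restrict (hm _ hB)) hfP hfμ).trans
      (piecewise_ae_eq_restrict (hm _ hB)).symm
  · exact (condExp_ae_eq_restrict_of_restrict_eq hm hB.compl
      (Measure.restrict_add_restrict_compl_restrict_compl (hm _ hB)) hfP hfν).trans
      (piecewise_ae_eq_restrict_compl (hm _ hB)).symm

end MeasureTheory

/-- The measure-pasting identity of Step 3 of the proof of Theorem 2.4 of the paper: pasting two
probability measures agreeing on a sub-σ-algebra `m` along an `m`-measurable set `B` yields a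
probability measure agreeing with both on `m`, whose conditional expectation given `m` is the
corresponding indicator combination. -/
theorem pasting_measures_condexp
    {Ω : Type*} {m mΩ : MeasurableSpace Ω} (hm : m ≤ mΩ)
    (P₁ P₂ : @Measure Ω mΩ) [IsProbabilityMeasure P₁] [IsProbabilityMeasure P₂]
    (hagree : ∀ s : Set Ω, MeasurableSet[m] s → P₁ s = P₂ s)
    {B : Set Ω} (hB : MeasurableSet[m] B) :
    IsProbabilityMeasure (P₁.restrict B + P₂.restrict Bᶜ) ∧
    (∀ s : Set Ω, MeasurableSet[m] s → (P₁.restrict B + P₂.restrict Bᶜ) s = P₁ s) ∧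
    ∀ f : Ω → ℝ, Integrable f P₁ → Integrable f P₂ →
      Integrable f (P₁.restrict B + P₂.restrict Bᶜ) ∧
      (P₁.restrict B + P₂.restrict Bᶜ)[f|m] =ᵐ[P₁.restrict B + P₂.restrict Bᶜ]
        (B.indicator (P₁[f|m]) + Bᶜ.indicator (P₂[f|m])) := by
  have hP_agree s hs := Measure.restrict_add_restrict_compl_apply_of_agree hm hagree hB (s := s) hs
  refine ⟨⟨?_⟩, hP_agree, fun f hf₁ hf₂ => ⟨?_, ?_⟩⟩
  · rw [hP_agree univ MeasurableSet.univ, measure_univ]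
  · exact hf₁.restrict.add_measure hf₂.restrict
  · exact condExp_restrict_add_restrict_compl hm hB hf₁ hf₂
end

section
/- Let Ω be a standard Borel measurable space with σ-algebra 𝒜, let P be a probability measure on Ω, let ℱ = (ℱ_s)_{s ∈ [0,∞)} be a filtration of sub-σ-algebras of 𝒜 such that each ℱ_s is countably generated, and write ℱ_{s+} := ⋂_{u > s} ℱ_u. Let M : [0,∞) → Ω → ℝ be a process adapted to (ℱ_{s+})_s such that every path s ↦ M_s(ω) is right-continuous, each M_s is P-integrable, the family {M_s | s ∈ [0,∞)} is uniformly integrable under P, and M is a martingale with respect to (ℱ_{s+})_s under P (i.e., E^P[M_u | ℱ_{s+}] = M_s P-a.s. for all s ≤ u). Fix t ∈ [0,∞) and let κ(ω) := condExpKernel P ℱ_t (ω) be the regular conditional probability of P given ℱ_t. Then for P-almost every ω: for all t ≤ r ≤ u, M_u is κ(ω)-integrable and E^{κ(ω)}[M_u | ℱ_{r+}] = M_r, κ(ω)-almost everywhere; that is, (M_{t+s})_{s ≥ 0} is a martingale with respect to (ℱ_{(t+s)+})_{s ≥ 0} under κ(ω). -/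
open MeasureTheory ProbabilityTheory
open scoped ENNReal NNReal

/-- The right-continuous modification `ℱ_{s+} := ⋂_{u > s} ℱ_u` of a filtration. -/
def filtrationRightLimit {Ω : Type*} {mΩ : MeasurableSpace Ω}
    (ℱ : Filtration ℝ≥0 mΩ) (s : ℝ≥0) : MeasurableSpace Ω :=
  ⨅ u ∈ Set.Ioi s, ℱ u

/-! On a countable dense set `D` of times the martingale identity of `P` transfers to the
regular conditional probability `κ(ω)` for `P`-a.e. `ω`: for fixed times it suffices to test it on
the countably many sets of a generating π-system, and the tower property of `P` gives it there.
A time `s ≥ t` is then approached from the right through `D`; the approximants are conditional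
expectations of one integrable variable under `κ(ω)`, hence uniformly integrable, so by
right-continuity and Vitali's theorem the identity passes to the limit, and also to `ℱ_{r+}`. -/

open Filter Topology

section FiltrationRightLimit

variable {Ω : Type*} {mΩ : MeasurableSpace Ω} (ℱ : Filtration ℝ≥0 mΩ)

lemma filtrationRightLimit_le (s : ℝ≥0) : filtrationRightLimit ℱ s ≤ mΩ :=
  (iInf₂_le (s + 1) (lt_add_of_pos_right s one_pos)).trans (ℱ.le _)

lemma le_filtrationRightLimit (s : ℝ≥0) : ℱ s ≤ filtrationRightLimit ℱ s :=
  le_iInf₂ fun _ hu => ℱ.mono (le_of_lt hu)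

lemma filtrationRightLimit_le_of_lt {s u : ℝ≥0} (h : s < u) :
    filtrationRightLimit ℱ s ≤ ℱ u :=
  iInf₂_le u h

end FiltrationRightLimit

theorem Set.Countable.generatePiSystem {α : Type*} {S : Set (Set α)} (hS : S.Countable) :
    (generatePiSystem S).Countable := by
  refine ((Set.countable_ofPred_finite_subset hS).image fun F => ⋂₀ F).mono fun A hA => ?_
  induction hA with
  | base hs => exact ⟨{_}, ⟨Set.finite_singleton _, Set.singleton_subset_iff.2 hs⟩,
      Set.sInter_singleton _⟩
  | inter _ _ _ ihs ihu =>
    obtain ⟨F, ⟨hF, hFS⟩, rfl⟩ := ihs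
    obtain ⟨G, ⟨hG, hGS⟩, rfl⟩ := ihu
    exact ⟨F ∪ G, ⟨hF.union hG, Set.union_subset hFS hGS⟩, Set.sInter_union F G⟩

theorem MeasurableSpace.exists_countable_isPiSystem_eq_generateFrom {α : Type*}
    [m : MeasurableSpace α] [CountablyGenerated α] :
    ∃ S : Set (Set α), S.Countable ∧ IsPiSystem S ∧ m = generateFrom S :=
  ⟨generatePiSystem (countableGeneratingSet α), countable_countableGeneratingSet.generatePiSystem,
    isPiSystem_generatePiSystem _, by
      rw [generateFrom_generatePiSystem_eq, generateFrom_countableGeneratingSet]⟩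

theorem setIntegral_eq_of_isPiSystem {α E : Type*} [NormedAddCommGroup E] [NormedSpace ℝ E]
    {m mα : MeasurableSpace α} (hm : m ≤ mα) {μ : Measure α} {S : Set (Set α)}
    (hgen : m = MeasurableSpace.generateFrom S) (hS : IsPiSystem S) {f g : α → E}
    (hf : Integrable f μ) (hg : Integrable g μ)
    (hfgS : ∀ A ∈ S, ∫ x in A, f x ∂μ = ∫ x in A, g x ∂μ) (hfg : ∫ x, f x ∂μ = ∫ x, g x ∂μ)
    {A : Set α} (hA : MeasurableSet[m] A) : ∫ x in A, f x ∂μ = ∫ x in A, g x ∂μ := by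
  induction A, hA using MeasurableSpace.induction_on_inter hgen hS with
  | empty => simp
  | basic A hA => exact hfgS A hA
  | compl B hB hBfg =>
    rw [setIntegral_compl (hm B hB) hf, setIntegral_compl (hm B hB) hg, hfg, hBfg]
  | iUnion B hBd hB hBfg =>
    rw [integral_iUnion (fun i => hm _ (hB i)) hBd hf.integrableOn,
      integral_iUnion (fun i => hm _ (hB i)) hBd hg.integrableOn]
    exact tsum_congr hBfg

theorem ae_eq_condExp_condExpKernel {Ω F : Type*} [NormedAddCommGroup F] [NormedSpace ℝ F]
    [CompleteSpace F] {m H G : MeasurableSpace Ω} [mΩ : MeasurableSpace Ω] [StandardBorelSpace Ω]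
    {P : Measure Ω} [IsFiniteMeasure P] (hmH : m ≤ H) (hH : H ≤ mΩ) (hGH : G ≤ H)
    (hG : @MeasurableSpace.CountablyGenerated Ω G) {f g : Ω → F} (hf : Integrable f P)
    (hg : StronglyMeasurable[G] g) (hfg : g =ᵐ[P] P[f|H]) :
    ∀ᵐ ω ∂P, g =ᵐ[condExpKernel P m ω] (condExpKernel P m ω)[f|G] := by
  have hm : m ≤ mΩ := hmH.trans hH
  have hg_int : Integrable g P := integrable_condExp.congr hfg.symm
  have hset : ∀ A, MeasurableSet[G] A → ∀ᵐ ω ∂P,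
      ∫ x in A, g x ∂condExpKernel P m ω = ∫ x in A, f x ∂condExpKernel P m ω := by
    intro A hA
    have hAΩ : MeasurableSet A := hH _ (hGH _ hA)
    have htower : P[A.indicator g|m] =ᵐ[P] P[A.indicator f|m] :=
      calc P[A.indicator g|m]
          =ᵐ[P] P[P[A.indicator f|H]|m] := condExp_congr_ae
            ((hfg.indicator).trans (condExp_indicator hf (hGH _ hA)).symm)
        _ =ᵐ[P] P[A.indicator f|m] := condExp_condExp_of_le hmH hH
    filter_upwards [htower, condExp_ae_eq_integral_condExpKernel hm (hf.indicator hAΩ),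
      condExp_ae_eq_integral_condExpKernel hm (hg_int.indicator hAΩ)] with ω h hfω hgω
    rw [← integral_indicator hAΩ, ← integral_indicator hAΩ, ← hfω, ← hgω, h]
  obtain ⟨S, hSc, hSpi, hSgen⟩ :=
    @MeasurableSpace.exists_countable_isPiSystem_eq_generateFrom Ω G hG
  have hS : ∀ᵐ ω ∂P, ∀ A ∈ S,
      ∫ x in A, g x ∂condExpKernel P m ω = ∫ x in A, f x ∂condExpKernel P m ω :=
    (ae_ball_iff hSc).2 fun A hA => hset A (hSgen ▸ MeasurableSpace.measurableSet_generateFrom hA)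
  filter_upwards [hS, hset Set.univ MeasurableSet.univ, hf.condExpKernel_ae,
    hg_int.condExpKernel_ae] with ω hωS hωuniv hfω hgω
  exact ae_eq_condExp_of_forall_setIntegral_eq (hGH.trans hH) hfω
    (fun _ _ _ => hgω.integrableOn)
    (fun A hA _ => setIntegral_eq_of_isPiSystem (hGH.trans hH) hSgen hSpi hgω hfω hωS
      (by simpa using hωuniv) hA)
    hg.aestronglyMeasurable

section ConditionalExpectationLimit

variable {Ω : Type*} {mΩ : MeasurableSpace Ω} {μ : Measure Ω} [IsFiniteMeasure μ] {f h : Ω → ℝ}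

theorem uniformIntegrable_of_ae_eq_condExp {ι : Type*} {m : ι → MeasurableSpace Ω}
    {g : ι → Ω → ℝ} (hm : ∀ i, m i ≤ mΩ) (hf : Integrable f μ) (hg : ∀ i, g i =ᵐ[μ] μ[f|m i]) :
    UniformIntegrable g 1 μ :=
  (hf.uniformIntegrable_condExp hm).ae_eq fun i => (hg i).symm

theorem integrable_of_tendsto_ae_of_ae_eq_condExp {m : ℕ → MeasurableSpace Ω}
    {g : ℕ → Ω → ℝ} (hm : ∀ n, m n ≤ mΩ) (hf : Integrable f μ)
    (hg : ∀ n, g n =ᵐ[μ] μ[f|m n])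
    (hlim : ∀ᵐ x ∂μ, Tendsto (fun n => g n x) atTop (𝓝 (h x))) :
    Integrable h μ :=
  have hUI := uniformIntegrable_of_ae_eq_condExp hm hf hg
  hUI.integrable_of_tendstoInMeasure (tendstoInMeasure_of_tendsto_ae hUI.1 hlim)

theorem setIntegral_eq_of_tendsto_ae_of_ae_eq_condExp {m : ℕ → MeasurableSpace Ω}
    {g : ℕ → Ω → ℝ} (hm : ∀ n, m n ≤ mΩ) (hf : Integrable f μ) (hg : ∀ n, g n =ᵐ[μ] μ[f|m n])
    (hlim : ∀ᵐ x ∂μ, Tendsto (fun n => g n x) atTop (𝓝 (h x)))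
    {A : Set Ω} (hA : ∀ n, MeasurableSet[m n] A) :
    ∫ x in A, h x ∂μ = ∫ x in A, f x ∂μ := by
  have hUI := uniformIntegrable_of_ae_eq_condExp hm hf hg
  have hh := integrable_of_tendsto_ae_of_ae_eq_condExp hm hf hg hlim
  have hL1 : Tendsto (fun n => eLpNorm (g n - h) 1 μ) atTop (𝓝 0) :=
    tendsto_Lp_finite_of_tendsto_ae le_rfl ENNReal.one_ne_top hUI.1
      (memLp_one_iff_integrable.2 hh) hUI.2.1 hlim
  have hconst : ∀ n, ∫ x in A, g n x ∂μ = ∫ x in A, f x ∂μ := fun n => by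
    rw [setIntegral_congr_ae (hm n A (hA n)) ((hg n).mono fun x hx _ => hx),
      setIntegral_condExp (hm n) hf (hA n)]
  refine tendsto_nhds_unique (tendsto_setIntegral_of_L1' h hh.1
    (.of_forall fun n => (hUI.memLp n).integrable le_rfl) hL1 A) ?_
  simp only [hconst, tendsto_const_nhds]

end ConditionalExpectationLimit

section RightContinuous

variable {Ω : Type*} {mΩ : MeasurableSpace Ω} {μ : Measure Ω} [IsFiniteMeasure μ]
  {G : ℝ≥0 → MeasurableSpace Ω} {M : ℝ≥0 → Ω → ℝ} {D : Set ℝ≥0} {t : ℝ≥0}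

theorem integrable_and_setIntegral_eq_of_dense (hG : ∀ q, G q ≤ mΩ) (hD : Dense D)
    (hmart : ∀ q ∈ D, ∀ q' ∈ D, t ≤ q → q ≤ q' → M q =ᵐ[μ] μ[M q'|G q])
    {s q₀ : ℝ≥0} (hrc : ∀ x, ContinuousWithinAt (fun u => M u x) (Set.Ici s) s)
    (hts : t ≤ s) (hq₀ : q₀ ∈ D) (hsq₀ : s < q₀) (hint₀ : Integrable (M q₀) μ) :
    Integrable (M s) μ ∧ ∀ A, (∀ q ∈ D, s < q → MeasurableSet[G q] A) →
      ∫ x in A, M s x ∂μ = ∫ x in A, M q₀ x ∂μ := by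
  obtain ⟨v, -, hvD, hv⟩ := hD.exists_seq_strictAnti_tendsto_of_lt hsq₀
  have hcond : ∀ n, M (v n) =ᵐ[μ] μ[M q₀|G (v n)] := fun n =>
    hmart _ (hvD n).2 _ hq₀ (hts.trans (hvD n).1.1.le) (hvD n).1.2.le
  have hlim : ∀ᵐ x ∂μ, Tendsto (fun n => M (v n) x) atTop (𝓝 (M s x)) :=
    ae_of_all _ fun x => (hrc x).tendsto.comp
      (tendsto_nhdsWithin_iff.2 ⟨hv, .of_forall fun n => (hvD n).1.1.le⟩)
  exact ⟨integrable_of_tendsto_ae_of_ae_eq_condExp (fun _ => hG _) hint₀ hcond hlim,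
    fun A hA => setIntegral_eq_of_tendsto_ae_of_ae_eq_condExp (fun _ => hG _) hint₀ hcond hlim
      fun n => hA _ (hvD n).2 (hvD n).1.1⟩

theorem condExp_filtrationRightLimit_ae_eq_of_dense (ℱ : Filtration ℝ≥0 mΩ)
    (hG : ∀ q, G q ≤ mΩ) (hℱG : ∀ q, ℱ q ≤ G q)
    (hadapted : ∀ s, StronglyMeasurable[filtrationRightLimit ℱ s] (M s))
    (hrc : ∀ x s, ContinuousWithinAt (fun u => M u x) (Set.Ici s) s) (hD : Dense D)
    (hint : ∀ q ∈ D, t ≤ q → Integrable (M q) μ)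
    (hmart : ∀ q ∈ D, ∀ q' ∈ D, t ≤ q → q ≤ q' → M q =ᵐ[μ] μ[M q'|G q])
    {r u : ℝ≥0} (htr : t ≤ r) (hru : r ≤ u) :
    Integrable (M u) μ ∧ μ[M u|filtrationRightLimit ℱ r] =ᵐ[μ] M r := by
  obtain ⟨q₀, hq₀, huq₀⟩ := hD.exists_gt u
  have hint₀ := hint q₀ hq₀ (htr.trans (hru.trans huq₀.le))
  obtain ⟨hMr, hr⟩ := integrable_and_setIntegral_eq_of_dense hG hD hmart (hrc · r) htr hq₀
    (hru.trans_lt huq₀) hint₀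
  obtain ⟨hMu, hu⟩ := integrable_and_setIntegral_eq_of_dense hG hD hmart (hrc · u)
    (htr.trans hru) hq₀ huq₀ hint₀
  refine ⟨hMu, (ae_eq_condExp_of_forall_setIntegral_eq (filtrationRightLimit_le ℱ r) hMu
    (fun _ _ _ => hMr.integrableOn) (fun B hB _ => ?_) (hadapted r).aestronglyMeasurable).symm⟩
  have hBG : ∀ q, r < q → MeasurableSet[G q] B := fun q hq =>
    hℱG q _ (filtrationRightLimit_le_of_lt ℱ hq _ hB)
  rw [hr B fun q _ hq => hBG q hq, hu B fun q _ hq => hBG q (hru.trans_lt hq)]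

end RightContinuous

theorem martingale_under_condexpKernel_general
    {Ω : Type*} [mΩ : MeasurableSpace Ω] [StandardBorelSpace Ω]
    (P : Measure Ω) [IsProbabilityMeasure P]
    (ℱ : Filtration ℝ≥0 mΩ)
    (hcg : ∀ s : ℝ≥0, @MeasurableSpace.CountablyGenerated Ω (ℱ s))
    (M : ℝ≥0 → Ω → ℝ)
    (hadapted : ∀ s : ℝ≥0, Measurable[filtrationRightLimit ℱ s] (M s))
    (hrc : ∀ ω : Ω, ∀ s : ℝ≥0, ContinuousWithinAt (fun u => M u ω) (Set.Ici s) s)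
    (hint : ∀ s : ℝ≥0, Integrable (M s) P)
    (hmart : ∀ s u : ℝ≥0, s ≤ u → P[M u|filtrationRightLimit ℱ s] =ᵐ[P] M s)
    (t : ℝ≥0) :
    ∀ᵐ ω ∂P, ∀ r u : ℝ≥0, t ≤ r → r ≤ u →
      Integrable (M u) (@condExpKernel Ω mΩ _ P _ (ℱ t) ω) ∧
      (@condExpKernel Ω mΩ _ P _ (ℱ t) ω)[M u|filtrationRightLimit ℱ r]
        =ᵐ[@condExpKernel Ω mΩ _ P _ (ℱ t) ω] M r := by
  -- `ℱ_{q+}` need not be countably generated; `ℱ_q ∨ σ(M_q)` is, and `M_q` is measurable for it.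
  let G q := ℱ q ⊔ MeasurableSpace.comap (M q) inferInstance
  have hGR q : G q ≤ filtrationRightLimit ℱ q :=
    sup_le (le_filtrationRightLimit ℱ q) (hadapted q).comap_le
  have hMG q : Measurable[G q] (M q) := (comap_measurable (M q)).mono le_sup_right le_rfl
  obtain ⟨D, hDc, hD⟩ := TopologicalSpace.exists_countable_dense ℝ≥0
  have hmartD : ∀ᵐ ω ∂P, ∀ q ∈ D, ∀ q' ∈ D, t ≤ q → q ≤ q' →
      M q =ᵐ[condExpKernel P (ℱ t) ω] (condExpKernel P (ℱ t) ω)[M q'|G q] := by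
    simp only [ae_ball_iff hDc, eventually_imp_distrib_left]
    intro q _ q' _ htq hqq'
    exact ae_eq_condExp_condExpKernel ((ℱ.mono htq).trans (le_filtrationRightLimit ℱ q))
      (filtrationRightLimit_le ℱ q) (hGR q) ((hcg q).sup (.comap (M q))) (hint q')
      (hMG q).stronglyMeasurable (hmart q q' hqq').symm
  have hintD : ∀ᵐ ω ∂P, ∀ q ∈ D, Integrable (M q) (condExpKernel P (ℱ t) ω) :=
    (ae_ball_iff hDc).2 fun q _ => (hint q).condExpKernel_ae
  filter_upwards [hmartD, hintD] with ω hmartω hintω r u htr hru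
  exact condExp_filtrationRightLimit_ae_eq_of_dense ℱ
    (fun q => (hGR q).trans (filtrationRightLimit_le ℱ q)) (fun _ => le_sup_left)
    (fun s => (hadapted s).stronglyMeasurable) hrc hD (fun q hq _ => hintω q hq) hmartω htr hru

/-- Claim (i) in the proof of Lemma 3.4 of the paper: a right-continuous, uniformly integrable
martingale `M` with respect to the right-continuous modification `(ℱ_{s+})` of a filtration with
countably generated σ-algebras remains, for `P`-a.e. `ω`, a martingale on `[t, ∞)` with respect to
`(ℱ_{r+})_{r ≥ t}` under the regular conditional probability `condexpKernel P (ℱ t) ω` of `P`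
given `ℱ_t`. -/
theorem martingale_under_condexpKernel
    {Ω : Type*} [mΩ : MeasurableSpace Ω] [StandardBorelSpace Ω]
    (P : Measure Ω) [IsProbabilityMeasure P]
    (ℱ : Filtration ℝ≥0 mΩ)
    (hcg : ∀ s : ℝ≥0, @MeasurableSpace.CountablyGenerated Ω (ℱ s))
    (M : ℝ≥0 → Ω → ℝ)
    (hadapted : ∀ s : ℝ≥0, Measurable[filtrationRightLimit ℱ s] (M s))
    (hrc : ∀ ω : Ω, ∀ s : ℝ≥0, ContinuousWithinAt (fun u => M u ω) (Set.Ici s) s)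
    (hint : ∀ s : ℝ≥0, Integrable (M s) P)
    (hui : UniformIntegrable M 1 P)
    (hmart : ∀ s u : ℝ≥0, s ≤ u → P[M u|filtrationRightLimit ℱ s] =ᵐ[P] M s)
    (t : ℝ≥0) :
    ∀ᵐ ω ∂P, ∀ r u : ℝ≥0, t ≤ r → r ≤ u →
      Integrable (M u) (@condExpKernel Ω mΩ _ P _ (ℱ t) ω) ∧
      (@condExpKernel Ω mΩ _ P _ (ℱ t) ω)[M u|filtrationRightLimit ℱ r]
        =ᵐ[@condExpKernel Ω mΩ _ P _ (ℱ t) ω] M r :=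
  martingale_under_condexpKernel_general (mΩ := mΩ) P ℱ hcg M hadapted hrc hint hmart t
end

section
/- Let Ω be a standard Borel measurable space with σ-algebra 𝒜, let P be a probability measure on Ω, let m₁ ⊆ m₂ ⊆ 𝒜 be sub-σ-algebras with m₂ countably generated, and let f : Ω → ℝ be P-integrable. Let κ(ω) := condExpKernel P m₁ (ω) be the regular conditional probability of P given m₁. Then for P-almost every ω: f is κ(ω)-integrable and E^{κ(ω)}[f | m₂] = E^{P}[f | m₂], κ(ω)-almost everywhere (where E^{P}[f | m₂] denotes any fixed version of the conditional expectation of f given m₂ under P). -/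
/-!
For every `m₂`-measurable `s`, the tower property and pulling out `1_s` give
`P[1_s f | m₁] = P[1_s P[f|m₂] | m₁]`, and representing both sides through the kernel
`κ = condExpKernel P m₁` gives `∫_s f dκ(ω) = ∫_s P[f|m₂] dκ(ω)` for `P`-a.e. `ω`. The null set
depends on `s`, so this is only taken over a countable algebra of sets generating `m₂`; outside
the union of these null sets a π-λ argument extends the identity to all of `m₂`, which
characterises `P[f|m₂]` as `κ(ω)[f|m₂]`.
-/

open MeasureTheory ProbabilityTheory

namespace MeasureTheory

variable {α E : Type*} [NormedAddCommGroup E] [NormedSpace ℝ E]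
  {m m₀ : MeasurableSpace α} {μ : Measure α} {S : Set (Set α)} {f g : α → E}

theorem setIntegral_eq_setIntegral_of_isPiSystem (hm : m ≤ m₀)
    (h_gen : m = MeasurableSpace.generateFrom S) (h_pi : IsPiSystem S) (h_univ : Set.univ ∈ S)
    (hf : Integrable f μ) (hg : Integrable g μ)
    (h_eq : ∀ s ∈ S, ∫ x in s, f x ∂μ = ∫ x in s, g x ∂μ) {t : Set α}
    (ht : MeasurableSet[m] t) : ∫ x in t, f x ∂μ = ∫ x in t, g x ∂μ := by
  have h_total : ∫ x, f x ∂μ = ∫ x, g x ∂μ := by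
    simpa only [setIntegral_univ] using h_eq _ h_univ
  induction t, ht using MeasurableSpace.induction_on_inter h_gen h_pi with
  | empty => simp
  | basic s hs => exact h_eq s hs
  | compl s hs ih =>
    rw [setIntegral_compl (hm s hs) hf, setIntegral_compl (hm s hs) hg, h_total, ih]
  | iUnion s hd hs ih =>
    rw [integral_iUnion (fun i ↦ hm _ (hs i)) hd hf.integrableOn,
      integral_iUnion (fun i ↦ hm _ (hs i)) hd hg.integrableOn]
    exact tsum_congr ih

theorem ae_eq_condExp_of_forall_setIntegral_eq_of_isPiSystem [CompleteSpace E] [IsFiniteMeasure μ]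
    (hm : m ≤ m₀) (h_gen : m = MeasurableSpace.generateFrom S) (h_pi : IsPiSystem S)
    (h_univ : Set.univ ∈ S) (hf : Integrable f μ) (hg : Integrable g μ)
    (hgm : AEStronglyMeasurable[m] g μ) (h_eq : ∀ s ∈ S, ∫ x in s, g x ∂μ = ∫ x in s, f x ∂μ) :
    g =ᵐ[μ] μ[f|m] :=
  ae_eq_condExp_of_forall_setIntegral_eq hm hf (fun _ _ _ ↦ hg.integrableOn)
    (fun _ ht _ ↦ setIntegral_eq_setIntegral_of_isPiSystem hm h_gen h_pi h_univ hg hf h_eq ht)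
    hgm

end MeasureTheory

theorem MeasurableSpace.CountablyGenerated.exists_countable_isSetAlgebra {α : Type*}
    [m : MeasurableSpace α] [MeasurableSpace.CountablyGenerated α] :
    ∃ 𝒜 : Set (Set α), 𝒜.Countable ∧ IsSetAlgebra 𝒜 ∧ m = MeasurableSpace.generateFrom 𝒜 :=
  ⟨generateSetAlgebra (countableGeneratingSet α),
    countable_generateSetAlgebra countable_countableGeneratingSet, isSetAlgebra_generateSetAlgebra,
    by rw [generateFrom_generateSetAlgebra_eq, generateFrom_countableGeneratingSet]⟩

namespace ProbabilityTheory

variable {Ω F : Type*} {m₁ m₂ : MeasurableSpace Ω} [mΩ : MeasurableSpace Ω]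
  [StandardBorelSpace Ω] [NormedAddCommGroup F] [NormedSpace ℝ F] [CompleteSpace F]
  {P : Measure Ω} [IsFiniteMeasure P] {f : Ω → F}

theorem ae_setIntegral_condExpKernel_condExp (h₁₂ : m₁ ≤ m₂) (h₂ : m₂ ≤ mΩ)
    (hf : Integrable f P) {s : Set Ω} (hs : MeasurableSet[m₂] s) :
    ∀ᵐ ω ∂P, ∫ x in s, (P[f|m₂]) x ∂condExpKernel P m₁ ω = ∫ x in s, f x ∂condExpKernel P m₁ ω := by
  have hm₁ : m₁ ≤ mΩ := h₁₂.trans h₂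
  have hg : Integrable (P[f|m₂]) P := integrable_condExp
  have h_tower : P[s.indicator (P[f|m₂])|m₁] =ᵐ[P] P[s.indicator f|m₁] :=
    (condExp_congr_ae (condExp_indicator hf hs).symm).trans (condExp_condExp_of_le h₁₂ h₂)
  filter_upwards [h_tower,
    condExp_ae_eq_integral_condExpKernel hm₁ (hg.indicator (h₂ s hs)),
    condExp_ae_eq_integral_condExpKernel hm₁ (hf.indicator (h₂ s hs))] with ω hω hgω hfω
  rw [← integral_indicator (h₂ s hs), ← integral_indicator (h₂ s hs), ← hgω, ← hfω, hω]

end ProbabilityTheory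

open MeasurableSpace.CountablyGenerated in
/-- The conditioning identity used in the proof of Lemma 3.4 of the paper: on a standard Borel
space, the regular conditional probability given a sub-σ-algebra `m₁` is compatible, outside a
single `P`-null set, with conditional expectations given a larger countably generated
sub-σ-algebra `m₂`. -/
theorem condexpKernel_condexp_compat
    {Ω : Type*} [mΩ : MeasurableSpace Ω] [StandardBorelSpace Ω]
    (P : Measure Ω) [IsProbabilityMeasure P]
    (f : Ω → ℝ) (hf : Integrable f P)
    {m₁ m₂ : MeasurableSpace Ω} (h₁₂ : m₁ ≤ m₂) (h₂ : m₂ ≤ mΩ)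
    (hcg : @MeasurableSpace.CountablyGenerated Ω m₂) :
    ∀ᵐ ω ∂P,
      Integrable f (@condExpKernel Ω mΩ _ P _ m₁ ω) ∧
      (@condExpKernel Ω mΩ _ P _ m₁ ω)[f|m₂] =ᵐ[@condExpKernel Ω mΩ _ P _ m₁ ω] P[f|m₂] := by
  -- in tactic mode the local `m₁`, `m₂` would otherwise be found as the ambient instance
  let := mΩ
  obtain ⟨𝒜, h𝒜_countable, h𝒜, h_gen⟩ := @exists_countable_isSetAlgebra Ω m₂ hcg
  have h𝒜_pi : IsPiSystem 𝒜 := fun s hs t ht _ ↦ h𝒜.inter_mem hs ht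
  have h_sets : ∀ᵐ ω ∂P, ∀ s ∈ 𝒜,
      ∫ x in s, (P[f|m₂]) x ∂condExpKernel P m₁ ω = ∫ x in s, f x ∂condExpKernel P m₁ ω :=
    (ae_ball_iff h𝒜_countable).2 fun s hs ↦ ae_setIntegral_condExpKernel_condExp h₁₂ h₂ hf
      (h_gen ▸ MeasurableSpace.measurableSet_generateFrom hs)
  filter_upwards [hf.condExpKernel_ae,
    (integrable_condExp (m := m₂) (f := f)).condExpKernel_ae, h_sets] with ω hfω hgω hω
  exact ⟨hfω, (ae_eq_condExp_of_forall_setIntegral_eq_of_isPiSystem h₂ h_gen h𝒜_pi h𝒜.univ_mem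
    hfω hgω stronglyMeasurable_condExp.aestronglyMeasurable hω).symm⟩
end
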